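/- arXiv:2511.17969 — 11 statements merged into one kernel-verified Lean document; each statement's English description precedes it below -/
import Mathlib

section
/- Let V be a nonzero finite-dimensional inner product space over ℂ, let T : V →ₗ[ℂ] V be symmetric (⟪T x, y⟫ = ⟪x, T y⟫ for all x, y), let A : V →ₗ[ℂ] V satisfy T ∘ A = A ∘ T, and let λ : ℂ be such that the eigenspace W = {ψ : A ψ = λ • ψ} contains a unit vector. Then there exist a vector w with ‖w‖ = 1, A w = λ • w, and a real number μ such that T w = (μ : ℂ) • w, μ = re ⟪w, T w⟫, and μ ≤ re ⟪ψ, T ψ⟫ for every ψ with ‖ψ‖ = 1 and A ψ = λ • ψ. That is, the constrained variational minimum of the Rayleigh quotient of T over the λ-eigenspace of A is attained and the minimizer is an eigenvector of T lying in that eigenspace (Gunnarsson–Lundqvist theorem). -/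
/-!
Since `T` commutes with `A`, it maps the eigenspace `W = ker (A - λ)` into itself, and its
restriction to `W` is again symmetric. The Rayleigh quotient of this restriction attains its
minimum on the compact unit sphere of `W`, and by the Lagrange multiplier rule a constrained
minimizer of the Rayleigh quotient of a self-adjoint operator is an eigenvector whose eigenvalue
is the minimum.
-/

open scoped InnerProductSpace
open Metric Module.End

namespace LinearMap.IsSymmetric

variable {𝕜 E : Type*} [RCLike 𝕜] [NormedAddCommGroup E] [InnerProductSpace 𝕜 E]
  [FiniteDimensional 𝕜 E] {T : E →ₗ[𝕜] E}

theorem exists_minimizing_eigenvector [Nontrivial E] (hT : T.IsSymmetric) :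
    ∃ w : E, ‖w‖ = 1 ∧ T w = (RCLike.re ⟪w, T w⟫_𝕜 : 𝕜) • w ∧
      ∀ ψ : E, ‖ψ‖ = 1 → RCLike.re ⟪w, T w⟫_𝕜 ≤ RCLike.re ⟪ψ, T ψ⟫_𝕜 := by
  have := FiniteDimensional.proper_rclike 𝕜 E
  set T' := hT.toSelfAdjoint
  have hre : ∀ x : E, T'.val.reApplyInnerSelf x = RCLike.re ⟪x, T x⟫_𝕜 := fun x => by
    rw [ContinuousLinearMap.reApplyInnerSelf_apply, ← hT x x]; rfl
  obtain ⟨w, hw, hmin⟩ := (isCompact_sphere (0 : E) 1).exists_isMinOn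
    (Set.nonempty_coe_sort.mp (NormedSpace.sphere_nonempty_rclike 𝕜 zero_le_one))
    T'.val.reApplyInnerSelf_continuous.continuousOn
  have hw1 : ‖w‖ = 1 := by simpa using hw
  have heig := T'.prop.eq_smul_self_of_isLocalExtrOn (x₀ := w)
    (by rw [hw1]; exact Or.inl hmin.localize)
  refine ⟨w, hw1, ?_, fun ψ hψ => ?_⟩
  · rwa [ContinuousLinearMap.rayleighQuotient, hre, hw1, one_pow, div_one] at heig
  · simpa [hre] using hmin (show ψ ∈ sphere (0 : E) 1 by simpa using hψ)

theorem exists_minimizing_eigenvector_of_mapsTo (hT : T.IsSymmetric) {p : Submodule 𝕜 E}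
    (hp : Set.MapsTo T p p) (hp_ne : p ≠ ⊥) :
    ∃ w ∈ p, ‖w‖ = 1 ∧ T w = (RCLike.re ⟪w, T w⟫_𝕜 : 𝕜) • w ∧
      ∀ ψ ∈ p, ‖ψ‖ = 1 → RCLike.re ⟪w, T w⟫_𝕜 ≤ RCLike.re ⟪ψ, T ψ⟫_𝕜 := by
  have := Submodule.nontrivial_iff_ne_bot.mpr hp_ne
  obtain ⟨w, hw1, hTw, hmin⟩ := (hT.restrict_invariant hp).exists_minimizing_eigenvector
  exact ⟨w, w.2, hw1, congrArg Subtype.val hTw, fun ψ hψ hψ1 => hmin ⟨ψ, hψ⟩ hψ1⟩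

end LinearMap.IsSymmetric

theorem gunnarsson_lundqvist_general
    {V : Type*} [NormedAddCommGroup V] [InnerProductSpace ℂ V]
    [FiniteDimensional ℂ V]
    (T A : V →ₗ[ℂ] V)
    (hT : ∀ x y : V, ⟪T x, y⟫_ℂ = ⟪x, T y⟫_ℂ)
    (hTA : T ∘ₗ A = A ∘ₗ T)
    (lam : ℂ)
    (hW : ∃ ψ : V, ‖ψ‖ = 1 ∧ A ψ = lam • ψ) :
    ∃ (w : V) (μ : ℝ), ‖w‖ = 1 ∧ A w = lam • w ∧ T w = (μ : ℂ) • w ∧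
      μ = (⟪w, T w⟫_ℂ).re ∧
      ∀ ψ : V, ‖ψ‖ = 1 → A ψ = lam • ψ → μ ≤ (⟪ψ, T ψ⟫_ℂ).re := by
  obtain ⟨ψ₀, hψ₀1, hAψ₀⟩ := hW
  have hinv : Set.MapsTo T (eigenspace A lam) (eigenspace A lam) :=
    mapsTo_genEigenspace_of_comm hTA.symm lam 1
  have hne : eigenspace A lam ≠ ⊥ := (Submodule.ne_bot_iff _).mpr
    ⟨ψ₀, mem_eigenspace_iff.mpr hAψ₀, ne_zero_of_norm_ne_zero (by simp [hψ₀1])⟩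
  obtain ⟨w, hwA, hw1, hTw, hmin⟩ :=
    LinearMap.IsSymmetric.exists_minimizing_eigenvector_of_mapsTo hT hinv hne
  exact ⟨w, _, hw1, mem_eigenspace_iff.mp hwA, hTw, rfl,
    fun ψ hψ1 hAψ => hmin ψ (mem_eigenspace_iff.mpr hAψ) hψ1⟩

/-- **Gunnarsson–Lundqvist theorem** (constrained variational principle):
the minimum of the Rayleigh quotient of a symmetric operator `T` over the
`λ`-eigenspace of a commuting operator `A` is attained, and the minimizer is an
eigenvector of `T` lying in that eigenspace. -/
theorem gunnarsson_lundqvist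
    {V : Type*} [NormedAddCommGroup V] [InnerProductSpace ℂ V]
    [FiniteDimensional ℂ V] [Nontrivial V]
    (T A : V →ₗ[ℂ] V)
    (hT : ∀ x y : V, ⟪T x, y⟫_ℂ = ⟪x, T y⟫_ℂ)
    (hTA : T ∘ₗ A = A ∘ₗ T)
    (lam : ℂ)
    (hW : ∃ ψ : V, ‖ψ‖ = 1 ∧ A ψ = lam • ψ) :
    ∃ (w : V) (μ : ℝ), ‖w‖ = 1 ∧ A w = lam • w ∧ T w = (μ : ℂ) • w ∧
      μ = (⟪w, T w⟫_ℂ).re ∧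
      ∀ ψ : V, ‖ψ‖ = 1 → A ψ = lam • ψ → μ ≤ (⟪ψ, T ψ⟫_ℂ).re :=
  gunnarsson_lundqvist_general T A hT hTA lam hW
end

section
/- Let V be a finite-dimensional inner product space over ℂ, let T : V →ₗ[ℂ] V be symmetric, and let P : V →ₗ[ℂ] V be an orthogonal projection (P symmetric and P ∘ P = P) commuting with T (T ∘ P = P ∘ T), with range P ≠ ⊥ and ker P ≠ ⊥. Set Q = id − P and, for Δ : ℝ, let H_Δ = T + Δ • Q. Define E_P = sInf { re ⟪ψ, T ψ⟫ : ‖ψ‖ = 1, P ψ = ψ } and E_Q = sInf { re ⟪ψ, T ψ⟫ : ‖ψ‖ = 1, P ψ = 0 }. Then sInf { re ⟪ψ, H_Δ ψ⟫ : ‖ψ‖ = 1 } = min (E_P) (E_Q + Δ). -/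
open scoped InnerProductSpace

/-- The ground-state energy of the penalized Hamiltonian `H_Δ = T + Δ • Q`
(with `Q = id − P`) equals `min E_P (E_Q + Δ)`. -/
theorem penalized_hamiltonian_infimum
    {V : Type*} [NormedAddCommGroup V] [InnerProductSpace ℂ V]
    [FiniteDimensional ℂ V]
    (T P : V →ₗ[ℂ] V)
    (hT : ∀ x y : V, ⟪T x, y⟫_ℂ = ⟪x, T y⟫_ℂ)
    (hP : ∀ x y : V, ⟪P x, y⟫_ℂ = ⟪x, P y⟫_ℂ)
    (hPP : P ∘ₗ P = P)
    (hTP : T ∘ₗ P = P ∘ₗ T)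
    (hrange : LinearMap.range P ≠ ⊥)
    (hker : LinearMap.ker P ≠ ⊥)
    (Δ : ℝ)
    (EP EQ : ℝ)
    (hEP : EP = sInf {x : ℝ | ∃ ψ : V, ‖ψ‖ = 1 ∧ P ψ = ψ ∧ x = (⟪ψ, T ψ⟫_ℂ).re})
    (hEQ : EQ = sInf {x : ℝ | ∃ ψ : V, ‖ψ‖ = 1 ∧ P ψ = 0 ∧ x = (⟪ψ, T ψ⟫_ℂ).re}) :
    sInf {x : ℝ | ∃ ψ : V, ‖ψ‖ = 1 ∧
        x = (⟪ψ, (T + (Δ : ℂ) • ((LinearMap.id : V →ₗ[ℂ] V) - P)) ψ⟫_ℂ).re}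
      = min EP (EQ + Δ) := by
  classical
  set H : V →ₗ[ℂ] V := T + (Δ : ℂ) • ((LinearMap.id : V →ₗ[ℂ] V) - P) with hHdef
  set S : Set ℝ := {x : ℝ | ∃ ψ : V, ‖ψ‖ = 1 ∧ x = (⟪ψ, H ψ⟫_ℂ).re} with hSdef
  set AP : Set ℝ := {x : ℝ | ∃ ψ : V, ‖ψ‖ = 1 ∧ P ψ = ψ ∧ x = (⟪ψ, T ψ⟫_ℂ).re} with hAP
  set AQ : Set ℝ := {x : ℝ | ∃ ψ : V, ‖ψ‖ = 1 ∧ P ψ = 0 ∧ x = (⟪ψ, T ψ⟫_ℂ).re} with hAQ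
  -- pointwise versions of the operator identities
  have hPid : ∀ x : V, P (P x) = P x := fun x => by
    simpa using LinearMap.ext_iff.mp hPP x
  have hTPx : ∀ x : V, T (P x) = P (T x) := fun x => by
    simpa using LinearMap.ext_iff.mp hTP x
  have hHapp : ∀ ψ : V, H ψ = T ψ + (Δ : ℂ) • (ψ - P ψ) := fun ψ => by
    simp [hHdef]
  -- unit vectors in range and kernel
  have hexP : ∃ ψ : V, ‖ψ‖ = 1 ∧ P ψ = ψ := by
    obtain ⟨y, hy, hy0⟩ := Submodule.exists_mem_ne_zero_of_ne_bot hrange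
    obtain ⟨z, hz⟩ := hy
    have hPy : P y = y := by rw [← hz, hPid]
    refine ⟨(‖y‖⁻¹ : ℂ) • y, ?_, ?_⟩
    · rw [norm_smul]; simp [norm_ne_zero_iff.mpr hy0]
    · rw [map_smul, hPy]
  have hexQ : ∃ ψ : V, ‖ψ‖ = 1 ∧ P ψ = 0 := by
    obtain ⟨y, hy, hy0⟩ := Submodule.exists_mem_ne_zero_of_ne_bot hker
    have hPy : P y = 0 := hy
    refine ⟨(‖y‖⁻¹ : ℂ) • y, ?_, ?_⟩
    · rw [norm_smul]; simp [norm_ne_zero_iff.mpr hy0]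
    · rw [map_smul, hPy, smul_zero]
  -- continuous versions for boundedness
  set T' : V →L[ℂ] V := LinearMap.toContinuousLinearMap T with hT'
  set H' : V →L[ℂ] V := LinearMap.toContinuousLinearMap H with hH'
  have hbound : ∀ (L : V →ₗ[ℂ] V) (C : V →L[ℂ] V), (∀ x, C x = L x) →
      ∀ ψ : V, ‖ψ‖ = 1 → -‖C‖ ≤ (⟪ψ, L ψ⟫_ℂ).re := by
    intro L C hC ψ hψ
    have h1 : |(⟪ψ, L ψ⟫_ℂ).re| ≤ ‖(⟪ψ, L ψ⟫_ℂ)‖ := Complex.abs_re_le_norm _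
    have h2 : ‖(⟪ψ, L ψ⟫_ℂ)‖ ≤ ‖ψ‖ * ‖L ψ‖ := norm_inner_le_norm _ _
    have h3 : ‖L ψ‖ ≤ ‖C‖ * ‖ψ‖ := by rw [← hC]; exact C.le_opNorm ψ
    have h4 : |(⟪ψ, L ψ⟫_ℂ).re| ≤ ‖C‖ := by
      calc |(⟪ψ, L ψ⟫_ℂ).re| ≤ ‖ψ‖ * ‖L ψ‖ := h1.trans h2
        _ ≤ ‖ψ‖ * (‖C‖ * ‖ψ‖) := mul_le_mul_of_nonneg_left h3 (norm_nonneg _)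
        _ = ‖C‖ := by rw [hψ]; ring
    linarith [neg_abs_le (⟪ψ, L ψ⟫_ℂ).re]
  have hbddS : BddBelow S := by
    refine ⟨-‖H'‖, ?_⟩
    rintro x ⟨ψ, hψ, rfl⟩
    exact hbound H H' (fun x => congrFun (LinearMap.coe_toContinuousLinearMap' H) x) ψ hψ
  have hbddP : BddBelow AP := by
    refine ⟨-‖T'‖, ?_⟩
    rintro x ⟨ψ, hψ, _, rfl⟩
    exact hbound T T' (fun x => congrFun (LinearMap.coe_toContinuousLinearMap' T) x) ψ hψ
  have hbddQ : BddBelow AQ := by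
    refine ⟨-‖T'‖, ?_⟩
    rintro x ⟨ψ, hψ, _, rfl⟩
    exact hbound T T' (fun x => congrFun (LinearMap.coe_toContinuousLinearMap' T) x) ψ hψ
  have hneP : AP.Nonempty := by
    obtain ⟨ψ, h1, h2⟩ := hexP
    exact ⟨_, ψ, h1, h2, rfl⟩
  have hneQ : AQ.Nonempty := by
    obtain ⟨ψ, h1, h2⟩ := hexQ
    exact ⟨_, ψ, h1, h2, rfl⟩
  have hneS : S.Nonempty := by
    obtain ⟨ψ, h1, _⟩ := hexP
    exact ⟨_, ψ, h1, rfl⟩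
  have hEPle : ∀ φ : V, ‖φ‖ = 1 → P φ = φ → EP ≤ (⟪φ, T φ⟫_ℂ).re := by
    intro φ h1 h2
    rw [hEP]
    exact csInf_le hbddP ⟨φ, h1, h2, rfl⟩
  have hEQle : ∀ φ : V, ‖φ‖ = 1 → P φ = 0 → EQ ≤ (⟪φ, T φ⟫_ℂ).re := by
    intro φ h1 h2
    rw [hEQ]
    exact csInf_le hbddQ ⟨φ, h1, h2, rfl⟩
  -- rescaling: quadratic form evaluated on non-unit vectors
  have hkey : ∀ (u : V) (c : ℝ), (⟪(c : ℂ) • u, T ((c : ℂ) • u)⟫_ℂ).re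
      = c ^ 2 * (⟪u, T u⟫_ℂ).re := by
    intro u c
    rw [map_smul, inner_smul_left, inner_smul_right]
    simp
    ring
  have hscaleP : ∀ u : V, P u = u → ‖u‖ ^ 2 * EP ≤ (⟪u, T u⟫_ℂ).re := by
    intro u hu
    rcases eq_or_ne u 0 with rfl | hu0
    · simp
    · have hc0 : ‖u‖ ≠ 0 := norm_ne_zero_iff.mpr hu0
      set φ : V := (‖u‖⁻¹ : ℂ) • u with hφ
      have hφnorm : ‖φ‖ = 1 := by
        rw [hφ, norm_smul]
        simp [hc0]
      have hPφ : P φ = φ := by rw [hφ, map_smul, hu]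
      have huφ : u = ((‖u‖ : ℝ) : ℂ) • φ := by
        rw [hφ, smul_smul]
        norm_cast
        rw [mul_inv_cancel₀ hc0, one_smul]
      have hle := hEPle φ hφnorm hPφ
      have hval2 : (⟪u, T u⟫_ℂ).re = ‖u‖ ^ 2 * (⟪φ, T φ⟫_ℂ).re := by
        nth_rewrite 1 2 [huφ]
        exact hkey φ ‖u‖
      rw [hval2]
      nlinarith [sq_nonneg ‖u‖]
  have hscaleQ : ∀ u : V, P u = 0 → ‖u‖ ^ 2 * EQ ≤ (⟪u, T u⟫_ℂ).re := by
    intro u hu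
    rcases eq_or_ne u 0 with rfl | hu0
    · simp
    · have hc0 : ‖u‖ ≠ 0 := norm_ne_zero_iff.mpr hu0
      set φ : V := (‖u‖⁻¹ : ℂ) • u with hφ
      have hφnorm : ‖φ‖ = 1 := by
        rw [hφ, norm_smul]
        simp [hc0]
      have hPφ : P φ = 0 := by rw [hφ, map_smul, hu, smul_zero]
      have huφ : u = ((‖u‖ : ℝ) : ℂ) • φ := by
        rw [hφ, smul_smul]
        norm_cast
        rw [mul_inv_cancel₀ hc0, one_smul]
      have hle := hEQle φ hφnorm hPφ
      have hval2 : (⟪u, T u⟫_ℂ).re = ‖u‖ ^ 2 * (⟪φ, T φ⟫_ℂ).re := by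
        nth_rewrite 1 2 [huφ]
        exact hkey φ ‖u‖
      rw [hval2]
      nlinarith [sq_nonneg ‖u‖]
  refine le_antisymm (le_min ?_ ?_) ?_
  · -- sInf S ≤ EP
    refine le_of_forall_pos_le_add ?_
    intro ε hε
    have : sInf AP < sInf AP + ε := by linarith
    obtain ⟨x, ⟨ψ, h1, h2, rfl⟩, hx⟩ := (csInf_lt_iff hbddP hneP).mp this
    have hmem : (⟪ψ, T ψ⟫_ℂ).re ∈ S := by
      refine ⟨ψ, h1, ?_⟩
      rw [hHapp, h2, sub_self, smul_zero, add_zero]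
    calc sInf S ≤ (⟪ψ, T ψ⟫_ℂ).re := csInf_le hbddS hmem
      _ ≤ sInf AP + ε := le_of_lt hx
      _ = EP + ε := by rw [hEP]
  · -- sInf S ≤ EQ + Δ
    refine le_of_forall_pos_le_add ?_
    intro ε hε
    have : sInf AQ < sInf AQ + ε := by linarith
    obtain ⟨x, ⟨ψ, h1, h2, rfl⟩, hx⟩ := (csInf_lt_iff hbddQ hneQ).mp this
    have hval : (⟪ψ, H ψ⟫_ℂ).re = (⟪ψ, T ψ⟫_ℂ).re + Δ := by
      rw [hHapp, h2, sub_zero, inner_add_right, inner_smul_right]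
      have hψψ : ⟪ψ, ψ⟫_ℂ = 1 := by
        rw [inner_self_eq_norm_sq_to_K, h1]
        norm_num
      rw [hψψ]
      simp
    have hmem : (⟪ψ, T ψ⟫_ℂ).re + Δ ∈ S := ⟨ψ, h1, hval.symm⟩
    calc sInf S ≤ (⟪ψ, T ψ⟫_ℂ).re + Δ := csInf_le hbddS hmem
      _ ≤ sInf AQ + ε + Δ := by linarith
      _ = EQ + Δ + ε := by rw [hEQ]; ring
  · -- min ≤ sInf S
    refine le_csInf hneS ?_
    rintro x ⟨ψ, hψ, rfl⟩
    set u : V := P ψ with hu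
    set v : V := ψ - P ψ with hv
    have hψuv : ψ = u + v := by rw [hu, hv]; abel
    have hPu : P u = u := hPid ψ
    have hPv : P v = 0 := by rw [hv, map_sub, hPid, sub_self]
    have huv : ⟪u, v⟫_ℂ = 0 := by
      rw [hu, hP, hPv, inner_zero_right]
    -- cross terms vanish
    have hcross1 : ⟪u, T v⟫_ℂ = 0 := by
      rw [hu, hP, ← hTPx, hPv, map_zero, inner_zero_right]
    have hcross2 : ⟪v, T u⟫_ℂ = 0 := by
      rw [hu, hTPx, ← hP, hPv, inner_zero_left]
    have hdecompT : ⟪ψ, T ψ⟫_ℂ = ⟪u, T u⟫_ℂ + ⟪v, T v⟫_ℂ := by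
      rw [hψuv, map_add, inner_add_left, inner_add_right, inner_add_right,
        hcross1, hcross2]
      ring
    have hψv : ⟪ψ, v⟫_ℂ = (‖v‖ : ℂ) ^ 2 := by
      rw [hψuv, inner_add_left, huv, zero_add, inner_self_eq_norm_sq_to_K]
      norm_cast
    have hval : (⟪ψ, H ψ⟫_ℂ).re
        = (⟪u, T u⟫_ℂ).re + (⟪v, T v⟫_ℂ).re + Δ * ‖v‖ ^ 2 := by
      rw [hHapp]
      rw [show ψ - P ψ = v from rfl]
      rw [inner_add_right, inner_smul_right, hψv, hdecompT]
      simp [Complex.add_re, Complex.mul_re, Complex.ofReal_re,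
        Complex.ofReal_im, ← Complex.ofReal_pow]
    have hpyth : ‖u‖ ^ 2 + ‖v‖ ^ 2 = 1 := by
      have h := norm_add_sq_eq_norm_sq_add_norm_sq_of_inner_eq_zero u v huv
      rw [← hψuv, hψ] at h
      norm_num at h
      linarith [h]
    have h1 : ‖u‖ ^ 2 * EP ≤ (⟪u, T u⟫_ℂ).re := hscaleP u hPu
    have h2 : ‖v‖ ^ 2 * EQ ≤ (⟪v, T v⟫_ℂ).re := hscaleQ v hPv
    have hm1 : min EP (EQ + Δ) ≤ EP := min_le_left _ _
    have hm2 : min EP (EQ + Δ) ≤ EQ + Δ := min_le_right _ _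
    rw [hval]
    have e : ‖u‖ ^ 2 * min EP (EQ + Δ) + ‖v‖ ^ 2 * min EP (EQ + Δ)
        = min EP (EQ + Δ) := by rw [← add_mul, hpyth, one_mul]
    have p1 := mul_le_mul_of_nonneg_left hm1 (sq_nonneg ‖u‖)
    have p2 := mul_le_mul_of_nonneg_left hm2 (sq_nonneg ‖v‖)
    nlinarith [p1, p2, e, h1, h2]
end

section
/- Let V be a finite-dimensional inner product space over ℂ, let T : V →ₗ[ℂ] V be symmetric, and let P : V →ₗ[ℂ] V be an orthogonal projection commuting with T, with range P ≠ ⊥ and ker P ≠ ⊥. Set Q = id − P, E_P = sInf { re ⟪ψ, T ψ⟫ : ‖ψ‖ = 1, P ψ = ψ } and E_Q = sInf { re ⟪ψ, T ψ⟫ : ‖ψ‖ = 1, P ψ = 0 }. If Δ : ℝ satisfies E_P < E_Q + Δ, then: (i) sInf { re ⟪ψ, (T + Δ • Q) ψ⟫ : ‖ψ‖ = 1 } = E_P, (ii) this infimum is attained, and (iii) every unit vector ψ with re ⟪ψ, (T + Δ • Q) ψ⟫ = E_P satisfies P ψ = ψ (penalty-functional theorem: for sufficiently large penalty Δ, the ground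 state of the penalized operator coincides with the lowest state of the constrained subspace and lies entirely in the range of P). -/
open scoped InnerProductSpace

private lemma inner_smul_re_aux {V : Type*} [NormedAddCommGroup V] [InnerProductSpace ℂ V]
    (T : V →ₗ[ℂ] V) (x : V) (c : ℝ) :
    (⟪(c:ℂ) • x, T ((c:ℂ) • x)⟫_ℂ).re = c ^ 2 * (⟪x, T x⟫_ℂ).re := by
  rw [map_smul, inner_smul_left, inner_smul_right, Complex.conj_ofReal, ← mul_assoc,
    ← Complex.ofReal_mul, Complex.re_ofReal_mul]
  ring

set_option maxHeartbeats 1000000 in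
/-- **Penalty-functional theorem**: for a sufficiently large penalty `Δ`
(namely `E_P < E_Q + Δ`), the ground state of the penalized operator
`T + Δ • Q` (with `Q = id − P`) coincides with the lowest state of the
constrained subspace (range of `P`): the infimum equals `E_P`, is attained,
and every minimizer lies entirely in the range of `P`. -/
theorem penalty_functional
    {V : Type*} [NormedAddCommGroup V] [InnerProductSpace ℂ V]
    [FiniteDimensional ℂ V]
    (T P : V →ₗ[ℂ] V)
    (hT : ∀ x y : V, ⟪T x, y⟫_ℂ = ⟪x, T y⟫_ℂ)
    (hP : ∀ x y : V, ⟪P x, y⟫_ℂ = ⟪x, P y⟫_ℂ)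
    (hPP : P ∘ₗ P = P)
    (hTP : T ∘ₗ P = P ∘ₗ T)
    (hrange : LinearMap.range P ≠ ⊥)
    (hker : LinearMap.ker P ≠ ⊥)
    (Δ : ℝ)
    (EP EQ : ℝ)
    (hEP : EP = sInf {x : ℝ | ∃ ψ : V, ‖ψ‖ = 1 ∧ P ψ = ψ ∧ x = (⟪ψ, T ψ⟫_ℂ).re})
    (hEQ : EQ = sInf {x : ℝ | ∃ ψ : V, ‖ψ‖ = 1 ∧ P ψ = 0 ∧ x = (⟪ψ, T ψ⟫_ℂ).re})
    (hΔ : EP < EQ + Δ) :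
    sInf {x : ℝ | ∃ ψ : V, ‖ψ‖ = 1 ∧
        x = (⟪ψ, (T + (Δ : ℂ) • ((LinearMap.id : V →ₗ[ℂ] V) - P)) ψ⟫_ℂ).re}
      = EP ∧
    (∃ ψ : V, ‖ψ‖ = 1 ∧
        (⟪ψ, (T + (Δ : ℂ) • ((LinearMap.id : V →ₗ[ℂ] V) - P)) ψ⟫_ℂ).re = EP) ∧
    (∀ ψ : V, ‖ψ‖ = 1 →
        (⟪ψ, (T + (Δ : ℂ) • ((LinearMap.id : V →ₗ[ℂ] V) - P)) ψ⟫_ℂ).re = EP →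
        P ψ = ψ) := by
  -- pointwise facts
  have hTPpt : ∀ x : V, T (P x) = P (T x) := fun x => LinearMap.congr_fun hTP x
  have hPPpt : ∀ x : V, P (P x) = P x := fun x => LinearMap.congr_fun hPP x
  have hPb : ∀ x : V, P (x - P x) = 0 := fun x => by rw [map_sub, hPPpt, sub_self]
  have hfc : Continuous fun ψ : V => (⟪ψ, T ψ⟫_ℂ).re :=
    Complex.continuous_re.comp (continuous_id.inner T.continuous_of_finiteDimensional)
  have hPc : Continuous P := P.continuous_of_finiteDimensional
  -- normalization helper
  have hnorm : ∀ x : V, x ≠ 0 → ‖((‖x‖⁻¹ : ℝ) : ℂ) • x‖ = 1 := by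
    intro x hx
    have hn : (0:ℝ) < ‖x‖ := norm_pos_iff.mpr hx
    rw [norm_smul]
    simp [abs_of_pos (inv_pos.mpr hn), inv_mul_cancel₀ hn.ne']
  -- compactness of the two constrained spheres
  have hKP : IsCompact {ψ : V | ‖ψ‖ = 1 ∧ P ψ = ψ} := by
    have h1 : {ψ : V | ‖ψ‖ = 1 ∧ P ψ = ψ} = Metric.sphere (0:V) 1 ∩ {ψ | P ψ = ψ} := by
      ext ψ; simp [Set.mem_inter_iff, mem_sphere_zero_iff_norm]
    rw [h1]
    exact (isCompact_sphere 0 1).inter_right (isClosed_eq hPc continuous_id)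
  have hKQ : IsCompact {ψ : V | ‖ψ‖ = 1 ∧ P ψ = 0} := by
    have h1 : {ψ : V | ‖ψ‖ = 1 ∧ P ψ = 0} = Metric.sphere (0:V) 1 ∩ {ψ | P ψ = 0} := by
      ext ψ; simp [Set.mem_inter_iff, mem_sphere_zero_iff_norm]
    rw [h1]
    exact (isCompact_sphere 0 1).inter_right (isClosed_eq hPc continuous_const)
  -- nonemptiness
  have hKPne : {ψ : V | ‖ψ‖ = 1 ∧ P ψ = ψ}.Nonempty := by
    obtain ⟨v, hvmem, hvne⟩ := Submodule.exists_mem_ne_zero_of_ne_bot hrange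
    obtain ⟨w, hw⟩ := hvmem
    have hPv : P v = v := by rw [← hw, hPPpt]
    exact ⟨((‖v‖⁻¹ : ℝ) : ℂ) • v, hnorm v hvne, by rw [map_smul, hPv]⟩
  have hKQne : {ψ : V | ‖ψ‖ = 1 ∧ P ψ = 0}.Nonempty := by
    obtain ⟨v, hvmem, hvne⟩ := Submodule.exists_mem_ne_zero_of_ne_bot hker
    have hPv : P v = 0 := hvmem
    exact ⟨((‖v‖⁻¹ : ℝ) : ℂ) • v, hnorm v hvne, by rw [map_smul, hPv, smul_zero]⟩
  -- minimizers
  obtain ⟨ψP, hψPmem, hminP⟩ := hKP.exists_isMinOn hKPne hfc.continuousOn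
  obtain ⟨ψQ, hψQmem, hminQ⟩ := hKQ.exists_isMinOn hKQne hfc.continuousOn
  obtain ⟨hψP1, hψP2⟩ := hψPmem
  obtain ⟨hψQ1, hψQ2⟩ := hψQmem
  have hminP' : ∀ φ : V, ‖φ‖ = 1 → P φ = φ → (⟪ψP, T ψP⟫_ℂ).re ≤ (⟪φ, T φ⟫_ℂ).re :=
    fun φ h1 h2 => isMinOn_iff.mp hminP φ ⟨h1, h2⟩
  have hminQ' : ∀ φ : V, ‖φ‖ = 1 → P φ = 0 → (⟪ψQ, T ψQ⟫_ℂ).re ≤ (⟪φ, T φ⟫_ℂ).re :=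
    fun φ h1 h2 => isMinOn_iff.mp hminQ φ ⟨h1, h2⟩
  -- EP and EQ are attained at the minimizers
  have hEPval : EP = (⟪ψP, T ψP⟫_ℂ).re := by
    rw [hEP]
    apply le_antisymm
    · exact csInf_le ⟨(⟪ψP, T ψP⟫_ℂ).re,
        fun x ⟨φ, h1, h2, h3⟩ => h3 ▸ hminP' φ h1 h2⟩ ⟨ψP, hψP1, hψP2, rfl⟩
    · exact le_csInf ⟨_, ψP, hψP1, hψP2, rfl⟩
        fun x ⟨φ, h1, h2, h3⟩ => h3 ▸ hminP' φ h1 h2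
  have hEQval : EQ = (⟪ψQ, T ψQ⟫_ℂ).re := by
    rw [hEQ]
    apply le_antisymm
    · exact csInf_le ⟨(⟪ψQ, T ψQ⟫_ℂ).re,
        fun x ⟨φ, h1, h2, h3⟩ => h3 ▸ hminQ' φ h1 h2⟩ ⟨ψQ, hψQ1, hψQ2, rfl⟩
    · exact le_csInf ⟨_, ψQ, hψQ1, hψQ2, rfl⟩
        fun x ⟨φ, h1, h2, h3⟩ => h3 ▸ hminQ' φ h1 h2
  have hEPle : ∀ φ : V, ‖φ‖ = 1 → P φ = φ → EP ≤ (⟪φ, T φ⟫_ℂ).re :=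
    fun φ h1 h2 => hEPval ▸ hminP' φ h1 h2
  have hEQle : ∀ φ : V, ‖φ‖ = 1 → P φ = 0 → EQ ≤ (⟪φ, T φ⟫_ℂ).re :=
    fun φ h1 h2 => hEQval ▸ hminQ' φ h1 h2
  -- scaled lower bounds
  have hPlow : ∀ x : V, P x = x → EP * ‖x‖ ^ 2 ≤ (⟪x, T x⟫_ℂ).re := by
    intro x hx
    rcases eq_or_ne x 0 with rfl | hx0
    · simp
    · have hn : (0:ℝ) < ‖x‖ := norm_pos_iff.mpr hx0
      have h1 := hEPle (((‖x‖⁻¹ : ℝ) : ℂ) • x) (hnorm x hx0) (by rw [map_smul, hx])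
      rw [inner_smul_re_aux T x ‖x‖⁻¹] at h1
      have h2 : (‖x‖⁻¹) ^ 2 * (⟪x, T x⟫_ℂ).re * ‖x‖ ^ 2 = (⟪x, T x⟫_ℂ).re := by
        field_simp
      nlinarith [mul_le_mul_of_nonneg_right h1 (sq_nonneg ‖x‖)]
  have hQlow : ∀ x : V, P x = 0 → EQ * ‖x‖ ^ 2 ≤ (⟪x, T x⟫_ℂ).re := by
    intro x hx
    rcases eq_or_ne x 0 with rfl | hx0
    · simp
    · have hn : (0:ℝ) < ‖x‖ := norm_pos_iff.mpr hx0
      have h1 := hEQle (((‖x‖⁻¹ : ℝ) : ℂ) • x) (hnorm x hx0)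
        (by rw [map_smul, hx, smul_zero])
      rw [inner_smul_re_aux T x ‖x‖⁻¹] at h1
      have h2 : (‖x‖⁻¹) ^ 2 * (⟪x, T x⟫_ℂ).re * ‖x‖ ^ 2 = (⟪x, T x⟫_ℂ).re := by
        field_simp
      nlinarith [mul_le_mul_of_nonneg_right h1 (sq_nonneg ‖x‖)]
  -- decomposition identity
  have hdecomp : ∀ ψ : V,
      (⟪ψ, (T + (Δ : ℂ) • ((LinearMap.id : V →ₗ[ℂ] V) - P)) ψ⟫_ℂ).re
        = (⟪P ψ, T (P ψ)⟫_ℂ).re + (⟪ψ - P ψ, T (ψ - P ψ)⟫_ℂ).re + Δ * ‖ψ - P ψ‖ ^ 2 := by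
    intro ψ
    have hab : ψ = P ψ + (ψ - P ψ) := by abel
    have hPbz : P (ψ - P ψ) = 0 := hPb ψ
    have h1 : ⟪P ψ, T (ψ - P ψ)⟫_ℂ = 0 := by
      rw [hP, ← hTPpt, hPbz, map_zero, inner_zero_right]
    have h2 : ⟪ψ - P ψ, T (P ψ)⟫_ℂ = 0 := by
      rw [hTPpt, ← hP, hPbz, inner_zero_left]
    have h3 : ⟪P ψ, ψ - P ψ⟫_ℂ = 0 := by
      rw [hP, hPbz, inner_zero_right]
    have e1 : (T + (Δ : ℂ) • ((LinearMap.id : V →ₗ[ℂ] V) - P)) ψ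
        = T ψ + (Δ : ℂ) • (ψ - P ψ) := by
      simp
    have e2 : ⟪ψ, T ψ⟫_ℂ = ⟪P ψ, T (P ψ)⟫_ℂ + ⟪ψ - P ψ, T (ψ - P ψ)⟫_ℂ := by
      conv_lhs => rw [hab]
      rw [map_add, inner_add_left, inner_add_right, inner_add_right, h1, h2]
      ring
    have e3 : ⟪ψ, ψ - P ψ⟫_ℂ = ⟪ψ - P ψ, ψ - P ψ⟫_ℂ := by
      rw [eq_comm, inner_sub_left, h3, sub_zero]
    have e4 : ((Δ : ℂ) * ⟪ψ - P ψ, ψ - P ψ⟫_ℂ).re = Δ * ‖ψ - P ψ‖ ^ 2 := by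
      rw [Complex.re_ofReal_mul, ← RCLike.re_to_complex, inner_self_eq_norm_sq]
    rw [e1, inner_add_right, inner_smul_right, Complex.add_re, e2, e3, e4, Complex.add_re]
  -- Pythagoras on the unit sphere
  have hpyth : ∀ ψ : V, ‖ψ‖ = 1 → ‖P ψ‖ ^ 2 + ‖ψ - P ψ‖ ^ 2 = 1 := by
    intro ψ hψ
    have h3 : ⟪P ψ, ψ - P ψ⟫_ℂ = 0 := by
      rw [hP, hPb, inner_zero_right]
    have h4 := norm_add_sq_eq_norm_sq_add_norm_sq_of_inner_eq_zero _ _ h3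
    have hab : P ψ + (ψ - P ψ) = ψ := by abel
    rw [hab, hψ] at h4
    nlinarith [h4]
  -- global lower bound
  have lowerAll : ∀ ψ : V, ‖ψ‖ = 1 →
      EP ≤ (⟪ψ, (T + (Δ : ℂ) • ((LinearMap.id : V →ₗ[ℂ] V) - P)) ψ⟫_ℂ).re := by
    intro ψ hψ
    have h1 := hPlow (P ψ) (hPPpt ψ)
    have h2 := hQlow (ψ - P ψ) (hPb ψ)
    have h3 := hpyth ψ hψ
    rw [hdecomp ψ]
    have h1' : EP * (1 - ‖ψ - P ψ‖ ^ 2) ≤ (⟪P ψ, T (P ψ)⟫_ℂ).re := by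
      rw [show (1 : ℝ) - ‖ψ - P ψ‖ ^ 2 = ‖P ψ‖ ^ 2 by linarith]; exact h1
    have ht : (0:ℝ) ≤ (EQ + Δ - EP) * ‖ψ - P ψ‖ ^ 2 :=
      mul_nonneg (by linarith) (sq_nonneg _)
    nlinarith [h1', h2, ht]
  -- the minimum is attained at ψP
  have hattain : (⟪ψP, (T + (Δ : ℂ) • ((LinearMap.id : V →ₗ[ℂ] V) - P)) ψP⟫_ℂ).re = EP := by
    rw [hdecomp ψP, hψP2, sub_self]
    simp [hEPval, hψP2]
  -- uniqueness: minimizers lie in range P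
  have huniq : ∀ ψ : V, ‖ψ‖ = 1 →
      (⟪ψ, (T + (Δ : ℂ) • ((LinearMap.id : V →ₗ[ℂ] V) - P)) ψ⟫_ℂ).re = EP → P ψ = ψ := by
    intro ψ hψ heq
    have h1 := hPlow (P ψ) (hPPpt ψ)
    have h2 := hQlow (ψ - P ψ) (hPb ψ)
    have h3 := hpyth ψ hψ
    rw [hdecomp ψ] at heq
    have h1' : EP * (1 - ‖ψ - P ψ‖ ^ 2) ≤ (⟪P ψ, T (P ψ)⟫_ℂ).re := by
      rw [show (1 : ℝ) - ‖ψ - P ψ‖ ^ 2 = ‖P ψ‖ ^ 2 by linarith]; exact h1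
    have hb0 : ‖ψ - P ψ‖ = 0 := by
      by_contra hbne
      have hbn : (0:ℝ) < ‖ψ - P ψ‖ := lt_of_le_of_ne (norm_nonneg _) (Ne.symm hbne)
      have hbpos : (0:ℝ) < ‖ψ - P ψ‖ ^ 2 := pow_pos hbn 2
      have ht : (0:ℝ) < (EQ + Δ - EP) * ‖ψ - P ψ‖ ^ 2 := mul_pos (by linarith) hbpos
      nlinarith [h1', h2, ht]
    have : ψ - P ψ = 0 := norm_eq_zero.mp hb0
    rw [sub_eq_zero] at this
    exact this.symm
  refine ⟨le_antisymm
    (csInf_le ⟨EP, fun x ⟨φ, h1, h2⟩ => h2 ▸ lowerAll φ h1⟩ ⟨ψP, hψP1, hattain.symm⟩)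
    (le_csInf ⟨EP, ψP, hψP1, hattain.symm⟩ fun x ⟨φ, h1, h2⟩ => h2 ▸ lowerAll φ h1),
    ⟨ψP, hψP1, hattain⟩, huniq⟩
end

section
/- Let V be a nonzero finite-dimensional inner product space over ℂ, let K : V →ₗ[ℂ] V be symmetric, let D be a type, let n : V → D be any function (the density map), and let L : D → ℝ (the external potential energy, depending only on the density). Assume the set { re ⟪Ψ, K Ψ⟫ + L (n Ψ) : ‖Ψ‖ = 1 } is bounded below. Define F : D → ℝ by F d = sInf { re ⟪Ψ, K Ψ⟫ : ‖Ψ‖ = 1 ∧ n Ψ = d }. Then sInf { re ⟪Ψ, K Ψ⟫ + L (n Ψ) : ‖Ψ‖ = 1 } = sInf { F d + L d : d ∈ n '' {Ψ : ‖Ψ‖ = 1} } (Levy constrained-search decomposition: the total-energy minimum over states equals the minimum over densities of the universal functional plus the external potential energy). -/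
open scoped InnerProductSpace

/-- **Levy constrained-search decomposition**: the total-energy minimum over
normalized states equals the minimum over attainable densities of the universal
functional `F` plus the external potential energy `L`. -/
theorem levy_constrained_search
    {V : Type*} [NormedAddCommGroup V] [InnerProductSpace ℂ V]
    [FiniteDimensional ℂ V] [Nontrivial V]
    (K : V →ₗ[ℂ] V)
    (hK : ∀ x y : V, ⟪K x, y⟫_ℂ = ⟪x, K y⟫_ℂ)
    {D : Type*} (n : V → D) (L : D → ℝ)
    (hbdd : BddBelow {x : ℝ | ∃ Ψ : V, ‖Ψ‖ = 1 ∧ x = (⟪Ψ, K Ψ⟫_ℂ).re + L (n Ψ)})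
    (F : D → ℝ)
    (hF : ∀ d : D, F d =
      sInf {x : ℝ | ∃ Ψ : V, (‖Ψ‖ = 1 ∧ n Ψ = d) ∧ x = (⟪Ψ, K Ψ⟫_ℂ).re}) :
    sInf {x : ℝ | ∃ Ψ : V, ‖Ψ‖ = 1 ∧ x = (⟪Ψ, K Ψ⟫_ℂ).re + L (n Ψ)}
      = sInf {x : ℝ | ∃ d ∈ n '' {Ψ : V | ‖Ψ‖ = 1}, x = F d + L d} := by
  set q : V → ℝ := fun Ψ => (⟪Ψ, K Ψ⟫_ℂ).re with hq
  set S : Set ℝ := {x : ℝ | ∃ Ψ : V, ‖Ψ‖ = 1 ∧ x = q Ψ + L (n Ψ)} with hS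
  set T : Set ℝ := {x : ℝ | ∃ d ∈ n '' {Ψ : V | ‖Ψ‖ = 1}, x = F d + L d} with hT
  obtain ⟨Ψ₀, hΨ₀⟩ : ∃ Ψ : V, ‖Ψ‖ = 1 := exists_norm_eq V zero_le_one
  have hSne : S.Nonempty := ⟨q Ψ₀ + L (n Ψ₀), Ψ₀, hΨ₀, rfl⟩
  -- fibers are bounded below
  have hfib : ∀ d : D, (∃ Ψ : V, ‖Ψ‖ = 1 ∧ n Ψ = d) →
      BddBelow {x : ℝ | ∃ Ψ : V, (‖Ψ‖ = 1 ∧ n Ψ = d) ∧ x = q Ψ} := by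
    rintro d _
    obtain ⟨c, hc⟩ := hbdd
    refine ⟨c - L d, ?_⟩
    rintro x ⟨Φ, ⟨hΦ, hΦd⟩, rfl⟩
    have : c ≤ q Φ + L (n Φ) := hc ⟨Φ, hΦ, rfl⟩
    rw [hΦd] at this
    linarith
  -- every element of T is ≥ sInf S
  have hTge : ∀ x ∈ T, sInf S ≤ x := by
    rintro x ⟨d, ⟨Ψ, hΨ, rfl⟩, rfl⟩
    have hfne : ({x : ℝ | ∃ Φ : V, (‖Φ‖ = 1 ∧ n Φ = n Ψ) ∧ x = q Φ}).Nonempty :=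
      ⟨q Ψ, Ψ, ⟨hΨ, rfl⟩, rfl⟩
    have : sInf S - L (n Ψ) ≤ F (n Ψ) := by
      rw [hF]
      refine le_csInf hfne ?_
      rintro y ⟨Φ, ⟨hΦ, hΦd⟩, rfl⟩
      have hmem : q Φ + L (n Φ) ∈ S := ⟨Φ, hΦ, rfl⟩
      have := csInf_le hbdd hmem
      rw [hΦd] at this
      show sInf S - L (n Ψ) ≤ q Φ
      linarith
    linarith
  have hTne : T.Nonempty := ⟨F (n Ψ₀) + L (n Ψ₀), n Ψ₀, ⟨Ψ₀, hΨ₀, rfl⟩, rfl⟩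
  apply le_antisymm
  · exact le_csInf hTne hTge
  · refine le_csInf hSne ?_
    rintro x ⟨Ψ, hΨ, rfl⟩
    have hFle : F (n Ψ) ≤ q Ψ := by
      rw [hF]
      exact csInf_le (hfib (n Ψ) ⟨Ψ, hΨ, rfl⟩) ⟨Ψ, ⟨hΨ, rfl⟩, rfl⟩
    have hmemT : F (n Ψ) + L (n Ψ) ∈ T := ⟨n Ψ, ⟨Ψ, hΨ, rfl⟩, rfl⟩
    have := csInf_le ⟨sInf S, hTge⟩ hmemT
    linarith
end

section
/- Let V be an inner product space over ℂ, let N ≥ 1, let ψi : Fin N → V be an orthonormal family, let ψf : Fin N → V be any family, and let φc ∈ V be a nonzero vector lying in the span of the ψi such that ⟪ψf k, φc⟫ = 0 for every k. Then the Gram matrix S with entries S k l = ⟪ψf k, ψi l⟫ satisfies det S = 0 (the overlap ⟨Φf|Φi⟩ between the core-excited and ground Slater determinants vanishes). -/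
open scoped InnerProductSpace

/-- The overlap `⟨Φf|Φi⟩` between the core-excited and ground Slater
determinants vanishes: if a nonzero vector `φc` lies in the span of the
orthonormal family `ψi` and is orthogonal to every `ψf k`, then the Gram
determinant `det (⟪ψf k, ψi l⟫)` is zero. -/
theorem slater_overlap_vanishes
    {V : Type*} [NormedAddCommGroup V] [InnerProductSpace ℂ V]
    {N : ℕ} (hN : 1 ≤ N)
    (ψi ψf : Fin N → V)
    (hortho : Orthonormal ℂ ψi)
    (φc : V) (hφc : φc ≠ 0)
    (hspan : φc ∈ Submodule.span ℂ (Set.range ψi))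
    (hperp : ∀ k : Fin N, ⟪ψf k, φc⟫_ℂ = 0)
    (S : Matrix (Fin N) (Fin N) ℂ)
    (hS : ∀ k l : Fin N, S k l = ⟪ψf k, ψi l⟫_ℂ) :
    S.det = 0 := by
  obtain ⟨c, hc⟩ := (Submodule.mem_span_range_iff_exists_fun ℂ).mp hspan
  rw [← Matrix.exists_mulVec_eq_zero_iff]
  refine ⟨c, ?_, ?_⟩
  · intro h0
    apply hφc
    rw [← hc, h0]
    simp
  · funext k
    have := hperp k
    rw [← hc] at this
    simpa [Matrix.mulVec, dotProduct, hS, inner_sum, inner_smul_right,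
      mul_comm] using this
end

section
/- Let V be an inner product space over ℂ, N ≥ 1, ψf ψi : Fin N → V families of vectors, O : V →ₗ[ℂ] V a linear map, and for n : Fin N let M n denote the N×N complex matrix with entries (M n) k l = ⟪ψf k, ψi l⟫ for l ≠ n and (M n) k n = ⟪ψf k, O (ψi n)⟫. If there is an index c : Fin N with ⟪ψf k, ψi c⟫ = 0 for all k, then Σ_{n : Fin N} det (M n) = det (M c); i.e. the one-body transition matrix element between the Slater determinants reduces to the single term in which the core orbital ψi c is replaced by O (ψi c). -/
open scoped InnerProductSpace

/-- If the core column of the overlap matrix vanishes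
(`⟪ψf k, ψi c⟫ = 0` for all `k`), then the one-body transition matrix element
`Σ_n det (M n)` between the Slater determinants reduces to the single term
`det (M c)` in which the core orbital `ψi c` is replaced by `O (ψi c)`. -/
theorem transition_element_single_term
    {V : Type*} [NormedAddCommGroup V] [InnerProductSpace ℂ V]
    {N : ℕ} (hN : 1 ≤ N)
    (ψf ψi : Fin N → V) (O : V →ₗ[ℂ] V)
    (M : Fin N → Matrix (Fin N) (Fin N) ℂ)
    (hM : ∀ n k l : Fin N,
      M n k l = if l = n then ⟪ψf k, O (ψi n)⟫_ℂ else ⟪ψf k, ψi l⟫_ℂ)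
    (c : Fin N) (hc : ∀ k : Fin N, ⟪ψf k, ψi c⟫_ℂ = 0) :
    ∑ n : Fin N, (M n).det = (M c).det := by
  apply Finset.sum_eq_single
  · intro n _ hn
    apply Matrix.det_eq_zero_of_column_eq_zero c
    intro k
    rw [hM n k c, if_neg (fun h : c = n => hn h.symm), hc k]
  · intro h
    exact absurd (Finset.mem_univ c) h
end

section
/- Let V be an inner product space over ℂ, N ≥ 1, ψf : Fin N → V any family, ψi : Fin N → V an orthonormal family, O : V →ₗ[ℂ] V linear, and φc ∈ V with ‖φc‖ = 1, φc lying in the span of the ψi, ⟪ψf k, φc⟫ = 0 for every k, and ⟪φc, O φc⟫ = 0 (dipole selection rule). Let G be the (N+1)×(N+1) complex matrix with G k l = ⟪ψf k, ψi l⟫ for k, l < N, G k N = ⟪ψf k, O φc⟫ for k < N, G N l = ⟪φc, ψi l⟫ for l < N, and G N N = ⟪φc, O φc⟫. Then Σ_{n : Fin N} det (M n) = − det G; i.e. the one-body transition element between the core-excited and ground Slater determinants equals minus the overlap determinant of the (N+1)-electron determinants obtained by appending the core orbital φc to the final family and the polarized core orbital O φc to the initial family (selection-rule-aware formula, Eq.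 (23)). -/
/-!
Write `φc = ∑ l, d l • ψi l`. By linearity the last column `⟪·, O φc⟫` of `G` is
`∑ m, d m • ⟪·, O (ψi m)⟫`, so `det G = ∑ m, d m * det G_m`, where `G_m` is `G` with last column
`⟪·, O (ψi m)⟫`. In `G_m` the combination `∑ l, d l • (column l)` is `⟪·, φc⟫`, which is the last
unit vector because `ψf k ⟂ φc` and `‖φc‖ = 1`; hence `d m * det G_m` is the determinant of `G_m`
with column `m` replaced by that unit vector. Expanding along it leaves `M m`, with the sign of
the transposition that moves column `m` to the end.
-/

open scoped InnerProductSpace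

namespace Matrix

variable {R : Type*} [CommRing R]

theorem det_updateCol_finset_sum {n ι : Type*} [DecidableEq n] [Fintype n]
    (A : Matrix n n R) (j : n) (s : Finset ι) (f : ι → n → R) :
    (A.updateCol j (∑ i ∈ s, f i)).det = ∑ i ∈ s, (A.updateCol j (f i)).det := by
  have := (detRowAlternating : (n → R) [⋀^n]→ₗ[R] R).map_update_sum s j f Aᵀ
  change det (updateRow Aᵀ j _) = ∑ i ∈ s, det (updateRow Aᵀ j (f i)) at this
  simpa only [updateRow_transpose, det_transpose] using this

theorem det_updateCol_mulVec {n : Type*} [DecidableEq n] [Fintype n]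
    (A : Matrix n n R) (j : n) (c : n → R) :
    (A.updateCol j (A *ᵥ c)).det = c j * A.det := by
  rw [← smul_eq_mul, ← det_updateCol_sum A j c]
  simp only [smul_eq_mul, mul_comm (c _)]
  rfl

variable {N : ℕ}

theorem det_updateCol_last_single (A : Matrix (Fin (N + 1)) (Fin (N + 1)) R) :
    (A.updateCol (Fin.last N) (Pi.single (Fin.last N) 1)).det =
      (A.submatrix Fin.castSucc Fin.castSucc).det := by
  rw [det_succ_column _ (Fin.last N), Fintype.sum_eq_single (Fin.last N)]
  · simp only [updateCol_self, Pi.single_eq_same, Fin.succAbove_last, ← two_mul,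
      pow_mul, neg_one_sq, one_pow, mul_one, one_mul]
    congr 1
    ext i j
    exact updateCol_ne (Fin.castSucc_lt_last j).ne
  · intro i hi
    simp [Pi.single_eq_of_ne hi]

theorem det_updateCol_castSucc_single_last (A : Matrix (Fin (N + 1)) (Fin (N + 1)) R)
    (m : Fin N) :
    (A.updateCol m.castSucc (Pi.single (Fin.last N) 1)).det =
      -((A.submatrix Fin.castSucc Fin.castSucc).updateCol m
        (fun k => A k.castSucc (Fin.last N))).det := by
  have hm : m.castSucc ≠ Fin.last N := (Fin.castSucc_lt_last m).ne
  have hswap := det_permute' (Equiv.swap m.castSucc (Fin.last N))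
    (A.updateCol m.castSucc (Pi.single (Fin.last N) 1))
  have hmove := submatrix_updateCol_equiv A m.castSucc (Pi.single (Fin.last N) 1)
    (Equiv.refl _) (Equiv.swap m.castSucc (Fin.last N))
  simp only [Equiv.coe_refl, id_eq, Equiv.symm_swap, Equiv.swap_apply_left] at hmove
  rw [hmove, det_updateCol_last_single, Equiv.Perm.sign_swap hm] at hswap
  have hblock : (A.submatrix id (Equiv.swap m.castSucc (Fin.last N))).submatrix
      Fin.castSucc Fin.castSucc = (A.submatrix Fin.castSucc Fin.castSucc).updateCol m
        (fun k => A k.castSucc (Fin.last N)) := by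
    ext k l
    rcases eq_or_ne l m with rfl | hl
    · simp
    · simp [hl, Equiv.swap_apply_of_ne_of_ne (Fin.castSucc_injective _ |>.ne hl)
        (Fin.castSucc_lt_last l).ne]
  rw [hblock, Units.val_neg, Units.val_one, Int.cast_neg, Int.cast_one] at hswap
  linear_combination hswap

theorem det_eq_neg_sum_det_updateCol (G : Matrix (Fin (N + 1)) (Fin (N + 1)) R)
    (d : Fin N → R) (v : Fin N → Fin (N + 1) → R)
    (hd : G *ᵥ Fin.snoc d 0 = Pi.single (Fin.last N) 1)
    (hv : (fun i => G i (Fin.last N)) = ∑ m, d m • v m) :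
    G.det = -∑ m, ((G.submatrix Fin.castSucc Fin.castSucc).updateCol m
      (fun k => v m k.castSucc)).det := by
  have hsplit : G.det = ∑ m, d m * (G.updateCol (Fin.last N) (v m)).det := by
    conv_lhs => rw [← updateCol_eq_self G (Fin.last N), hv]
    simp only [det_updateCol_finset_sum, det_updateCol_smul]
  have hreplace (m : Fin N) : d m * (G.updateCol (Fin.last N) (v m)).det =
      ((G.updateCol (Fin.last N) (v m)).updateCol m.castSucc
        (Pi.single (Fin.last N) 1)).det := by
    have hcomb : G.updateCol (Fin.last N) (v m) *ᵥ Fin.snoc d 0 = Pi.single (Fin.last N) 1 := by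
      rw [← hd]
      ext i
      simp [mulVec, dotProduct, Fin.sum_univ_castSucc]
    rw [← hcomb, det_updateCol_mulVec, Fin.snoc_castSucc]
  rw [hsplit, ← Finset.sum_neg_distrib]
  refine Finset.sum_congr rfl fun m _ => ?_
  rw [hreplace, det_updateCol_castSucc_single_last]
  congr 3 <;> ext <;> simp

end Matrix

open Matrix in
theorem srb_transition_formula_general
    {V : Type*} [NormedAddCommGroup V] [InnerProductSpace ℂ V]
    {N : ℕ}
    (ψf ψi : Fin N → V)
    (O : V →ₗ[ℂ] V)
    (φc : V) (hnorm : ‖φc‖ = 1)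
    (hspan : φc ∈ Submodule.span ℂ (Set.range ψi))
    (hperp : ∀ k : Fin N, ⟪ψf k, φc⟫_ℂ = 0)
    (M : Fin N → Matrix (Fin N) (Fin N) ℂ)
    (hM : ∀ n k l : Fin N,
      M n k l = if l = n then ⟪ψf k, O (ψi n)⟫_ℂ else ⟪ψf k, ψi l⟫_ℂ)
    (G : Matrix (Fin (N + 1)) (Fin (N + 1)) ℂ)
    (hG₁ : ∀ k l : Fin N, G k.castSucc l.castSucc = ⟪ψf k, ψi l⟫_ℂ)
    (hG₂ : ∀ k : Fin N, G k.castSucc (Fin.last N) = ⟪ψf k, O φc⟫_ℂ)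
    (hG₃ : ∀ l : Fin N, G (Fin.last N) l.castSucc = ⟪φc, ψi l⟫_ℂ)
    (hG₄ : G (Fin.last N) (Fin.last N) = ⟪φc, O φc⟫_ℂ) :
    ∑ n : Fin N, (M n).det = - G.det := by
  obtain ⟨d, hd⟩ := (Submodule.mem_span_range_iff_exists_fun ℂ).mp hspan
  set χ : Fin (N + 1) → V := Fin.snoc ψf φc
  have hG (i : Fin (N + 1)) (l : Fin N) : G i l.castSucc = ⟪χ i, ψi l⟫_ℂ := by
    induction i using Fin.lastCases <;> simp [χ, hG₁, hG₃]
  have hGlast (i : Fin (N + 1)) : G i (Fin.last N) = ⟪χ i, O φc⟫_ℂ := by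
    induction i using Fin.lastCases <;> simp [χ, hG₂, hG₄]
  have hχφc : (fun i => ⟪χ i, φc⟫_ℂ) = Pi.single (Fin.last N) 1 := by
    ext i
    induction i using Fin.lastCases with
    | last => simp [χ, inner_self_eq_norm_sq_to_K, hnorm]
    | cast k => simp [χ, hperp]
  have hGd : G *ᵥ Fin.snoc d 0 = Pi.single (Fin.last N) 1 := by
    rw [← hχφc, ← hd]
    ext i
    simp [mulVec, dotProduct, Fin.sum_univ_castSucc, hG, mul_comm]
  have hGv : (fun i => G i (Fin.last N)) = ∑ m, d m • fun i => ⟪χ i, O (ψi m)⟫_ℂ := by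
    ext i
    simp [hGlast, ← hd]
  rw [det_eq_neg_sum_det_updateCol G d _ hGd hGv, neg_neg]
  refine Finset.sum_congr rfl fun n _ => congrArg det ?_
  ext k l
  rw [hM, updateCol_apply]
  split_ifs <;> simp [χ, hG₁]

/-- **Selection-rule-aware (SRB) formula, Eq. (23)**: the one-body transition
element `Σ_n det (M n)` between the core-excited and ground Slater determinants
equals minus the overlap determinant `det G` of the `(N+1)`-electron
determinants obtained by appending the core orbital `φc` to the final family
and the polarized core orbital `O φc` to the initial family. -/
theorem srb_transition_formula
    {V : Type*} [NormedAddCommGroup V] [InnerProductSpace ℂ V]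
    {N : ℕ} (hN : 1 ≤ N)
    (ψf ψi : Fin N → V)
    (hortho : Orthonormal ℂ ψi)
    (O : V →ₗ[ℂ] V)
    (φc : V) (hnorm : ‖φc‖ = 1)
    (hspan : φc ∈ Submodule.span ℂ (Set.range ψi))
    (hperp : ∀ k : Fin N, ⟪ψf k, φc⟫_ℂ = 0)
    (hsel : ⟪φc, O φc⟫_ℂ = 0)
    (M : Fin N → Matrix (Fin N) (Fin N) ℂ)
    (hM : ∀ n k l : Fin N,
      M n k l = if l = n then ⟪ψf k, O (ψi n)⟫_ℂ else ⟪ψf k, ψi l⟫_ℂ)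
    (G : Matrix (Fin (N + 1)) (Fin (N + 1)) ℂ)
    (hG₁ : ∀ k l : Fin N, G k.castSucc l.castSucc = ⟪ψf k, ψi l⟫_ℂ)
    (hG₂ : ∀ k : Fin N, G k.castSucc (Fin.last N) = ⟪ψf k, O φc⟫_ℂ)
    (hG₃ : ∀ l : Fin N, G (Fin.last N) l.castSucc = ⟪φc, ψi l⟫_ℂ)
    (hG₄ : G (Fin.last N) (Fin.last N) = ⟪φc, O φc⟫_ℂ) :
    ∑ n : Fin N, (M n).det = - G.det :=
  srb_transition_formula_general ψf ψi O φc hnorm hspan hperp M hM G hG₁ hG₂ hG₃ hG₄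
end

section
/- Let V be an inner product space over ℂ, N ≥ 1, ψf : Fin N → V any family, ψi : Fin N → V an orthonormal family, O : V →ₗ[ℂ] V linear, and φc ∈ V with ‖φc‖ = 1, φc lying in the span of the ψi, ⟪ψf k, φc⟫ = 0 for every k, and ⟪φc, O φc⟫ = 0. For k : Fin N let R k be the N×N complex matrix whose rows are (R k) a l = ⟪ψf a, ψi l⟫ for a ≠ k and (R k) k l = ⟪φc, ψi l⟫. Then Σ_{n : Fin N} det (M n) = Σ_{k : Fin N} ⟪ψf k, O φc⟫ · det (R k); i.e. the one-body transition element equals the core-hole-basis (CHB) sum over occupied final orbitals, with each final orbital ψf k replaced in turn by the core orbital φc (Eq. (21)). -/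
open scoped InnerProductSpace
open Matrix

/-! Write `S` for the overlap matrix `⟪ψf k, ψi l⟫`, `A` for `⟪ψf k, O (ψi l)⟫` and `c` for the
coefficients of `φc` in the `ψi`. Expanding `det (M n)` along its `n`-th column gives
`Σ n, det (M n) = tr (adj S * A)`. Since `φc ⟂ ψf k` we have `S c = 0`, and `‖φc‖ = 1` gives
`b ⬝ c = 1` for the row `b l = ⟪φc, ψi l⟫`. Then `adj S = c (bᵀ adj S)` has rank at most one, so
the trace collapses to `(bᵀ adj S) ⬝ (A c)`, whose `k`-th terms are `det (R k)` (expansion along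
row `k`) and `⟪ψf k, O φc⟫`. -/

namespace Matrix

variable {n R : Type*} [Fintype n] [DecidableEq n] [CommRing R]

theorem det_updateRow_eq_vecMul_adjugate (S : Matrix n n R) (b : n → R) (k : n) :
    (S.updateRow k b).det = (b ᵥ* S.adjugate) k := by
  rw [← cramer_transpose_apply, cramer_eq_adjugate_mulVec, ← adjugate_transpose,
    mulVec_transpose]

theorem sum_det_updateCol_eq_trace_adjugate_mul (S A : Matrix n n R) :
    ∑ j, (S.updateCol j (fun i => A i j)).det = (S.adjugate * A).trace := by
  simp only [← cramer_apply, cramer_eq_adjugate_mulVec, trace, diag_apply, mul_apply, mulVec,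
    dotProduct]

theorem det_one_sub_vecMulVec (c b : n → R) : (1 - vecMulVec c b).det = 1 - b ⬝ᵥ c := by
  rw [vecMulVec_eq Unit, det_one_sub_mul_comm, det_unique, sub_apply, one_apply_eq,
    replicateRow_mul_replicateCol_apply]

/-- `S (1 - c bᵀ) = S`, and `1 - c bᵀ` is singular with kernel containing `c`, so
`adj S = adj (1 - c bᵀ) adj S` has all its columns on the line through `c`. -/
theorem adjugate_eq_vecMulVec_of_mulVec_eq_zero {S : Matrix n n R} {b c : n → R}
    (hSc : S *ᵥ c = 0) (hbc : b ⬝ᵥ c = 1) :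
    S.adjugate = vecMulVec c (b ᵥ* S.adjugate) := by
  set Q := 1 - vecMulVec c b
  have hSQ : S * Q = S := by
    rw [Matrix.mul_sub, Matrix.mul_one, mul_vecMulVec, hSc, zero_vecMulVec, sub_zero]
  have hQ_adj : Q * Q.adjugate = 0 := by
    rw [mul_adjugate, det_one_sub_vecMulVec, hbc, sub_self, zero_smul]
  have hadjQ : Q.adjugate = vecMulVec c b * Q.adjugate :=
    calc Q.adjugate = (Q + vecMulVec c b) * Q.adjugate := by rw [sub_add_cancel, Matrix.one_mul]
      _ = vecMulVec c b * Q.adjugate := by rw [Matrix.add_mul, hQ_adj, zero_add]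
  calc S.adjugate = Q.adjugate * S.adjugate := by rw [← adjugate_mul_distrib, hSQ]
    _ = vecMulVec c (b ᵥ* S.adjugate) := by
      rw [hadjQ, Matrix.mul_assoc, ← adjugate_mul_distrib, hSQ, vecMulVec_mul]

theorem trace_adjugate_mul_of_mulVec_eq_zero {S : Matrix n n R} {b c : n → R}
    (hSc : S *ᵥ c = 0) (hbc : b ⬝ᵥ c = 1) (A : Matrix n n R) :
    (S.adjugate * A).trace = (b ᵥ* S.adjugate) ⬝ᵥ (A *ᵥ c) := by
  conv_lhs => rw [adjugate_eq_vecMulVec_of_mulVec_eq_zero hSc hbc]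
  rw [vecMulVec_mul, trace_vecMulVec, dotProduct_comm, ← dotProduct_mulVec]

theorem sum_det_updateCol_eq_sum_mul_det_updateRow {S : Matrix n n R} {b c : n → R}
    (hSc : S *ᵥ c = 0) (hbc : b ⬝ᵥ c = 1) (A : Matrix n n R) :
    ∑ j, (S.updateCol j (fun i => A i j)).det = ∑ k, (A *ᵥ c) k * (S.updateRow k b).det := by
  simp only [sum_det_updateCol_eq_trace_adjugate_mul, trace_adjugate_mul_of_mulVec_eq_zero hSc hbc,
    det_updateRow_eq_vecMul_adjugate, dotProduct, mul_comm]

end Matrix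

theorem inner_sum_smul_eq_dotProduct {𝕜 E ι : Type*} [RCLike 𝕜] [NormedAddCommGroup E]
    [InnerProductSpace 𝕜 E] [Fintype ι] (x : E) (v : ι → E) (a : ι → 𝕜) :
    ⟪x, ∑ l, a l • v l⟫_𝕜 = (fun l => ⟪x, v l⟫_𝕜) ⬝ᵥ a := by
  simp only [inner_sum, inner_smul_right, dotProduct, mul_comm]

theorem chb_transition_formula_general
    {V : Type*} [NormedAddCommGroup V] [InnerProductSpace ℂ V]
    {N : ℕ}
    (ψf ψi : Fin N → V)
    (O : V →ₗ[ℂ] V)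
    (φc : V) (hnorm : ‖φc‖ = 1)
    (hspan : φc ∈ Submodule.span ℂ (Set.range ψi))
    (hperp : ∀ k : Fin N, ⟪ψf k, φc⟫_ℂ = 0)
    (M : Fin N → Matrix (Fin N) (Fin N) ℂ)
    (hM : ∀ n k l : Fin N,
      M n k l = if l = n then ⟪ψf k, O (ψi n)⟫_ℂ else ⟪ψf k, ψi l⟫_ℂ)
    (R : Fin N → Matrix (Fin N) (Fin N) ℂ)
    (hR : ∀ k a l : Fin N,
      R k a l = if a = k then ⟪φc, ψi l⟫_ℂ else ⟪ψf a, ψi l⟫_ℂ) :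
    ∑ n : Fin N, (M n).det = ∑ k : Fin N, ⟪ψf k, O φc⟫_ℂ * (R k).det := by
  obtain ⟨c, rfl⟩ := (Submodule.mem_span_range_iff_exists_fun ℂ).mp hspan
  let S : Matrix (Fin N) (Fin N) ℂ := .of fun k l => ⟪ψf k, ψi l⟫_ℂ
  let A : Matrix (Fin N) (Fin N) ℂ := .of fun k l => ⟪ψf k, O (ψi l)⟫_ℂ
  let b : Fin N → ℂ := fun l => ⟪∑ j, c j • ψi j, ψi l⟫_ℂ
  have hSc : S *ᵥ c = 0 := funext fun k =>
    (inner_sum_smul_eq_dotProduct _ _ _).symm.trans (hperp k)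
  have hbc : b ⬝ᵥ c = 1 := by
    rw [← inner_sum_smul_eq_dotProduct, inner_self_eq_norm_sq_to_K, hnorm]
    norm_num
  have hAc : ∀ k, (A *ᵥ c) k = ⟪ψf k, O (∑ j, c j • ψi j)⟫_ℂ := fun k => by
    simp only [map_sum, map_smul, inner_sum_smul_eq_dotProduct]
    rfl
  have hM' : ∀ n, M n = S.updateCol n (fun k => A k n) := fun n => by
    ext k l
    rw [hM, updateCol_apply]
    split_ifs <;> rfl
  have hR' : ∀ k, R k = S.updateRow k b := fun k => by
    ext a l
    rw [hR, updateRow_apply]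
    split_ifs <;> rfl
  simp only [hM', hR', sum_det_updateCol_eq_sum_mul_det_updateRow hSc hbc, hAc]

/-- **Core-hole-basis (CHB) formula, Eq. (21)**: the one-body transition
element `Σ_n det (M n)` equals the sum over occupied final orbitals of the
dipole coefficient `⟪ψf k, O φc⟫` times the overlap determinant `det (R k)`
in which the final orbital `ψf k` is replaced by the core orbital `φc`. -/
theorem chb_transition_formula
    {V : Type*} [NormedAddCommGroup V] [InnerProductSpace ℂ V]
    {N : ℕ} (hN : 1 ≤ N)
    (ψf ψi : Fin N → V)
    (hortho : Orthonormal ℂ ψi)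
    (O : V →ₗ[ℂ] V)
    (φc : V) (hnorm : ‖φc‖ = 1)
    (hspan : φc ∈ Submodule.span ℂ (Set.range ψi))
    (hperp : ∀ k : Fin N, ⟪ψf k, φc⟫_ℂ = 0)
    (hsel : ⟪φc, O φc⟫_ℂ = 0)
    (M : Fin N → Matrix (Fin N) (Fin N) ℂ)
    (hM : ∀ n k l : Fin N,
      M n k l = if l = n then ⟪ψf k, O (ψi n)⟫_ℂ else ⟪ψf k, ψi l⟫_ℂ)
    (R : Fin N → Matrix (Fin N) (Fin N) ℂ)
    (hR : ∀ k a l : Fin N,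
      R k a l = if a = k then ⟪φc, ψi l⟫_ℂ else ⟪ψf a, ψi l⟫_ℂ) :
    ∑ n : Fin N, (M n).det = ∑ k : Fin N, ⟪ψf k, O φc⟫_ℂ * (R k).det :=
  chb_transition_formula_general ψf ψi O φc hnorm hspan hperp M hM R hR
end

section
/- Let V be a finite-dimensional inner product space over ℂ of dimension M, let e : Fin M → V be an orthonormal basis, let N ≤ M, let ψi : Fin N → V be given by ψi k = e (Fin.castLE k) (the occupied orbitals are the first N basis vectors), let c : Fin N be a core index with core orbital φc = ψi c, let ψf : Fin N → V be any family with ⟪ψf k, φc⟫ = 0 for every k, and let O : V →ₗ[ℂ] V be linear. For an index m with N ≤ m < M, let G m denote the N×N matrix obtained from the Gram matrix (⟪ψf k, ψi l⟫) by replacing its c-th column with (⟪ψf k, e m⟫)_k. Then Σ_{n : Fin N} det (M n) = Σ_{m : N ≤ m < M} ⟪e m, O φc⟫ · det (G m); i.e. the one-body transition element equals the ground-state-basis (GSB) sum over unoccupied orbitals e m, each term being the dipole coefficient ⟪e m, O φc⟫ times the overlap determinant of the final Slater determinant with the initial one in which the core orbital is replaced by e m (Eq. (20)). -/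
open scoped InnerProductSpace

/-- **Ground-state-basis (GSB) formula, Eq. (20)**: the one-body transition
element `Σ_n det (M n)` equals the sum over unoccupied orbitals `e m`
(`N ≤ m < Mdim`) of the dipole coefficient `⟪e m, O φc⟫` times the overlap
determinant of the final Slater determinant with the initial one in which the
core orbital is replaced by `e m`. -/
theorem gsb_transition_formula
    {V : Type*} [NormedAddCommGroup V] [InnerProductSpace ℂ V]
    [FiniteDimensional ℂ V]
    {Mdim : ℕ} (e : OrthonormalBasis (Fin Mdim) ℂ V)
    {N : ℕ} (hN : 1 ≤ N) (hNM : N ≤ Mdim)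
    (ψi : Fin N → V) (hψi : ∀ k : Fin N, ψi k = e (Fin.castLE hNM k))
    (c : Fin N)
    (ψf : Fin N → V)
    (hperp : ∀ k : Fin N, ⟪ψf k, ψi c⟫_ℂ = 0)
    (O : V →ₗ[ℂ] V)
    (M : Fin N → Matrix (Fin N) (Fin N) ℂ)
    (hM : ∀ n k l : Fin N,
      M n k l = if l = n then ⟪ψf k, O (ψi n)⟫_ℂ else ⟪ψf k, ψi l⟫_ℂ)
    (G : Fin Mdim → Matrix (Fin N) (Fin N) ℂ)
    (hG : ∀ (m : Fin Mdim) (k l : Fin N),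
      G m k l = if l = c then ⟪ψf k, e m⟫_ℂ else ⟪ψf k, ψi l⟫_ℂ) :
    ∑ n : Fin N, (M n).det
      = ∑ m ∈ Finset.univ.filter (fun m : Fin Mdim => N ≤ (m : ℕ)),
          ⟪e m, O (ψi c)⟫_ℂ * (G m).det := by
  classical
  -- base Gram matrix
  set A : Matrix (Fin N) (Fin N) ℂ := fun k l => ⟪ψf k, ψi l⟫_ℂ with hA
  -- Step 1: only n = c contributes on the left
  have step1 : ∑ n : Fin N, (M n).det = (M c).det := by
    refine Finset.sum_eq_single c (fun n _ hn => ?_) (by simp)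
    refine Matrix.det_eq_zero_of_column_eq_zero c (fun k => ?_)
    rw [hM, if_neg (fun h => hn h.symm)]
    exact hperp k
  -- the determinant-of-updated-column linear map
  have detlin : ∀ (u : Fin N → ℂ) (s : ℂ),
      (A.updateCol c (s • u)).det = s * (A.updateCol c u).det :=
    fun u s => Matrix.det_updateCol_smul A c s u
  -- M c as an updated column
  have hMc : M c = A.updateCol c (fun k => ⟪ψf k, O (ψi c)⟫_ℂ) := by
    ext k l
    rw [hM, Matrix.updateCol_apply]
  -- expand O (ψi c) in the basis
  have hexp : ∀ k : Fin N, ⟪ψf k, O (ψi c)⟫_ℂ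
      = ∑ m : Fin Mdim, ⟪e m, O (ψi c)⟫_ℂ * ⟪ψf k, e m⟫_ℂ := by
    intro k
    conv_lhs => rw [← e.sum_repr' (O (ψi c))]
    rw [inner_sum]
    simp [inner_smul_right]
  -- linear map for multilinearity in column c
  let L : (Fin N → ℂ) →ₗ[ℂ] ℂ :=
    { toFun := fun u => (A.updateCol c u).det
      map_add' := fun u v => Matrix.det_updateCol_add A c u v
      map_smul' := fun s u => Matrix.det_updateCol_smul A c s u }
  have step2 : (M c).det
      = ∑ m : Fin Mdim, ⟪e m, O (ψi c)⟫_ℂ * (G m).det := by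
    have hGm : ∀ m : Fin Mdim,
        G m = A.updateCol c (fun k => ⟪ψf k, e m⟫_ℂ) := by
      intro m; ext k l
      rw [hG, Matrix.updateCol_apply]
    have hcol : (fun k => ⟪ψf k, O (ψi c)⟫_ℂ)
        = ∑ m : Fin Mdim, ⟪e m, O (ψi c)⟫_ℂ • (fun k => ⟪ψf k, e m⟫_ℂ) := by
      funext k
      rw [hexp k]
      simp
    have : M c = A.updateCol c
        (∑ m : Fin Mdim, ⟪e m, O (ψi c)⟫_ℂ • (fun k => ⟪ψf k, e m⟫_ℂ)) := by
      rw [hMc, hcol]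
    rw [this]
    have := map_sum L
      (fun m : Fin Mdim => ⟪e m, O (ψi c)⟫_ℂ • (fun k => ⟪ψf k, e m⟫_ℂ))
      Finset.univ
    simp only [L, LinearMap.coe_mk, AddHom.coe_mk] at this
    rw [this]
    refine Finset.sum_congr rfl (fun m _ => ?_)
    rw [Matrix.det_updateCol_smul, hGm m]
  -- Step 3: terms with m < N vanish
  rw [step1, step2, ← Finset.sum_filter_add_sum_filter_not Finset.univ
    (fun m : Fin Mdim => N ≤ (m : ℕ))]
  have hzero : ∑ m ∈ Finset.univ.filter (fun m : Fin Mdim => ¬ N ≤ (m : ℕ)),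
      ⟪e m, O (ψi c)⟫_ℂ * (G m).det = 0 := by
    refine Finset.sum_eq_zero (fun m hm => ?_)
    have hmN : (m : ℕ) < N := by
      simpa using (Finset.mem_filter.mp hm).2
    set l : Fin N := ⟨m, hmN⟩ with hl
    have hem : e m = ψi l := by
      have hc : Fin.castLE hNM l = m := Fin.ext rfl
      rw [hψi l, hc]
    by_cases hlc : l = c
    · have : (G m).det = 0 := by
        refine Matrix.det_eq_zero_of_column_eq_zero c (fun k => ?_)
        rw [hG]
        simp [hem, hlc, hperp k]
      rw [this, mul_zero]
    · have : (G m).det = 0 := by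
        refine Matrix.det_zero_of_column_eq (Ne.symm hlc) (fun k => ?_)
        rw [hG, hG]
        simp [hem, hlc]
      rw [this, mul_zero]
  rw [hzero, add_zero]
end

section
/- Let n ≥ 2, let A be an invertible n×n complex matrix, let u v : Fin n → ℂ be row vectors with expansion coefficients K_u = u ᵥ* A⁻¹ and K_v = v ᵥ* A⁻¹, and let j₁ j₂ : Fin n with j₁ ≠ j₂. Then det ((A.updateRow j₁ u).updateRow j₂ v) = (K_u j₁ * K_v j₂ − K_u j₂ * K_v j₁) * det A; i.e. replacing two distinct rows of A by u and v multiplies the determinant by the 2×2 minor of their expansion coefficients (double-excitation formula, Eq. (35)). -/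
/-!
Expanding `v = Kv ᵥ* A` linearly in row `j₂`, only the rows `A j₂` and `A j₁` of `A` contribute:
the first leaves a single excitation of row `j₁`, the second becomes a single excitation of row
`j₂` after swapping the two rows. A single excitation `A.updateRow j (c ᵥ* A)` has determinant
`c j * A.det`, since all other rows of `A` cancel by alternation.
-/

open Matrix

namespace Matrix

variable {R n : Type*} [CommRing R] [Fintype n] [DecidableEq n]

theorem det_updateRow_finset_sum_smul {ι : Type*} (M : Matrix n n R) (j : n) (s : Finset ι)
    (c : ι → R) (w : ι → n → R) :
    (M.updateRow j (∑ k ∈ s, c k • w k)).det = ∑ k ∈ s, c k * (M.updateRow j (w k)).det := by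
  have := map_sum ((detRowAlternating : (n → R) [⋀^n]→ₗ[R] R).toMultilinearMap.toLinearMap M j)
    (fun k => c k • w k) s
  simp only [map_smul, smul_eq_mul] at this
  exact this

theorem det_updateRow_vecMul (A : Matrix n n R) (j : n) (c : n → R) :
    (A.updateRow j (c ᵥ* A)).det = c j * A.det := by
  rw [vecMul_eq_sum, det_updateRow_sum, smul_eq_mul]

theorem det_updateRow_updateRow_swap {i j : n} (M : Matrix n n R) (hij : i ≠ j) (x y : n → R) :
    ((M.updateRow i x).updateRow j y).det = -((M.updateRow i y).updateRow j x).det := by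
  have hswap : ((M.updateRow i y).updateRow j x).submatrix (Equiv.swap i j) id
      = (M.updateRow i x).updateRow j y := by
    ext k l
    rcases eq_or_ne k i with rfl | hki
    · simp [hij]
    rcases eq_or_ne k j with rfl | hkj
    · simp [hij]
    · simp [Equiv.swap_apply_of_ne_of_ne hki hkj, hki, hkj]
  rw [← hswap, det_permute, Equiv.Perm.sign_swap hij]
  simp

theorem det_updateRow_updateRow_vecMul {i j : n} (A : Matrix n n R) (hij : i ≠ j)
    (x c : n → R) :
    ((A.updateRow i x).updateRow j (c ᵥ* A)).det
      = c j * (A.updateRow i x).det - c i * (A.updateRow j x).det := by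
  rw [vecMul_eq_sum, det_updateRow_finset_sum_smul (w := A), Fintype.sum_eq_add j i hij.symm]
  · have hj : A j = A.updateRow i x j := (updateRow_ne hij.symm).symm
    rw [hj, updateRow_eq_self, det_updateRow_updateRow_swap _ hij, updateRow_eq_self]
    ring
  · rintro k ⟨hkj, hki⟩
    have hk : A k = A.updateRow i x k := (updateRow_ne hki).symm
    rw [hk, det_updateRow_eq_zero hkj, mul_zero]

end Matrix

theorem double_excitation_det_general
    {n : ℕ}
    (A : Matrix (Fin n) (Fin n) ℂ) (hA : IsUnit A.det)
    (u v : Fin n → ℂ) (Ku Kv : Fin n → ℂ)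
    (hKu : Ku = u ᵥ* A⁻¹) (hKv : Kv = v ᵥ* A⁻¹)
    (j₁ j₂ : Fin n) (hj : j₁ ≠ j₂) :
    ((A.updateRow j₁ u).updateRow j₂ v).det
      = (Ku j₁ * Kv j₂ - Ku j₂ * Kv j₁) * A.det := by
  have expand : ∀ w : Fin n → ℂ, w = (w ᵥ* A⁻¹) ᵥ* A := fun w => by
    rw [vecMul_vecMul, nonsing_inv_mul A hA, vecMul_one]
  rw [expand u, expand v, ← hKu, ← hKv, det_updateRow_updateRow_vecMul A hj,
    det_updateRow_vecMul, det_updateRow_vecMul]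
  ring

/-- **Double-excitation formula, Eq. (35)**: replacing two distinct rows of an
invertible matrix `A` by `u` and `v` multiplies the determinant by the 2×2
minor of their expansion coefficients in the rows of `A`. -/
theorem double_excitation_det
    {n : ℕ} (hn : 2 ≤ n)
    (A : Matrix (Fin n) (Fin n) ℂ) (hA : IsUnit A.det)
    (u v : Fin n → ℂ) (Ku Kv : Fin n → ℂ)
    (hKu : Ku = u ᵥ* A⁻¹) (hKv : Kv = v ᵥ* A⁻¹)
    (j₁ j₂ : Fin n) (hj : j₁ ≠ j₂) :
    ((A.updateRow j₁ u).updateRow j₂ v).det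
      = (Ku j₁ * Kv j₂ - Ku j₂ * Kv j₁) * A.det :=
  double_excitation_det_general A hA u v Ku Kv hKu hKv j₁ j₂ hj
end

section
/- Let n ≥ 2, let A be an invertible n×n complex matrix, let v : Fin n → ℂ be a row vector with K_v = v ᵥ* A⁻¹, and let p : Fin n be a pivot index with K_v p ≠ 0. Set A' = A.updateRow p v. Then: (i) det A' = K_v p * det A, so A' is invertible; and (ii) for every row vector w : Fin n → ℂ and every index j ≠ p, the updated expansion coefficients K'_w = w ᵥ* (A')⁻¹ satisfy K'_w j = (w ᵥ* A⁻¹) j − ((v ᵥ* A⁻¹) j * (w ᵥ* A⁻¹) p) / (v ᵥ* A⁻¹) p (recursive update relation for the coefficient matrix after a single excitation, Eqs. (36)–(37)). -/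
open Matrix

/-- **Recursive update relation, Eqs. (36)–(37)**: after a single excitation
replacing the pivot row `p` of an invertible matrix `A` by `v` (with nonzero
pivot coefficient), the determinant is multiplied by the pivot coefficient
(so the updated matrix is invertible), and the expansion coefficients of any
row vector `w` in the rows of the updated matrix satisfy the stated recursive
relation at every index `j ≠ p`. -/
theorem recursive_coefficient_update
    {n : ℕ} (hn : 2 ≤ n)
    (A : Matrix (Fin n) (Fin n) ℂ) (hA : IsUnit A.det)
    (v : Fin n → ℂ) (p : Fin n) (hp : (v ᵥ* A⁻¹) p ≠ 0) :
    (A.updateRow p v).det = (v ᵥ* A⁻¹) p * A.det ∧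
    IsUnit (A.updateRow p v).det ∧
    ∀ (w : Fin n → ℂ) (j : Fin n), j ≠ p →
      (w ᵥ* (A.updateRow p v)⁻¹) j
        = (w ᵥ* A⁻¹) j - ((v ᵥ* A⁻¹) j * (w ᵥ* A⁻¹) p) / (v ᵥ* A⁻¹) p := by
  set K := v ᵥ* A⁻¹ with hK
  have hv : K ᵥ* A = v := by
    rw [hK, vecMul_vecMul, Matrix.nonsing_inv_mul A hA, vecMul_one]
  have hvsum : v = ∑ k, K k • A k := by
    funext c
    rw [← hv]
    simp [vecMul, dotProduct, Finset.sum_apply]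
  have hdet : (A.updateRow p v).det = K p * A.det := by
    rw [hvsum, det_updateRow_sum]; rfl
  have hunit : IsUnit (A.updateRow p v).det := by
    rw [hdet]; exact (IsUnit.mk0 _ hp).mul hA
  refine ⟨hdet, hunit, ?_⟩
  intro w j hj
  set Kw := w ᵥ* A⁻¹ with hKw
  have hw : Kw ᵥ* A = w := by
    rw [hKw, vecMul_vecMul, Matrix.nonsing_inv_mul A hA, vecMul_one]
  set u : Fin n → ℂ := fun i =>
    if i = p then Kw p / K p else Kw i - K i * Kw p / K p with hu
  have key : u ᵥ* (A.updateRow p v) = w := by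
    funext c
    rw [← hw]
    have hvc : v c = ∑ k, K k * A k c := by
      rw [hvsum]; simp [Finset.sum_apply]
    have this1 : ∀ i, u i * (A.updateRow p v) i c = Kw i * A i c
        + (if i = p then (Kw p / K p) * v c - Kw p * A p c
           else - (K i * Kw p / K p) * A i c) := by
      intro i
      by_cases hip : i = p <;> simp [hu, hip] <;> ring
    simp only [vecMul, dotProduct]
    rw [Finset.sum_congr rfl (fun i _ => this1 i), Finset.sum_add_distrib]
    have hsplit : (∑ i, (if i = p then (Kw p / K p) * v c - Kw p * A p c
        else - (K i * Kw p / K p) * A i c)) = 0 := by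
      rw [← Finset.add_sum_erase _ _ (Finset.mem_univ p)]
      have herase : ∀ i ∈ Finset.univ.erase p,
          (if i = p then (Kw p / K p) * v c - Kw p * A p c
           else - (K i * Kw p / K p) * A i c) = - (Kw p / K p) * (K i * A i c) := by
        intro i hi
        rw [if_neg (Finset.ne_of_mem_erase hi)]
        ring
      rw [Finset.sum_congr rfl herase, if_pos rfl, ← Finset.mul_sum,
        Finset.sum_erase_eq_sub (Finset.mem_univ p), hvc]
      field_simp
      ring
    rw [hsplit, add_zero]
  have hwinv : w ᵥ* (A.updateRow p v)⁻¹ = u := by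
    rw [← key, vecMul_vecMul, Matrix.mul_nonsing_inv _ hunit, vecMul_one]
  rw [hwinv, hu]
  simp only [if_neg hj]
end
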